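/- The quotient topological space obtained from the solid torus T = {(z₁, z₂) ∈ ℂ² : |z₁| = 1, |z₂| ≤ 1} (with the subspace topology from ℂ²) by identifying each point z with Θ(z) is homeomorphic to the closed unit ball in three-dimensional Euclidean space ℝ³. -/

import Mathlib

/-- The involution `Θ(z₁, z₂) = (conj z₁, conj z₂)` on `ℂ²`. -/
def Theta : ℂ × ℂ → ℂ × ℂ := fun z => (starRingEnd ℂ z.1, starRingEnd ℂ z.2)

/-- The solid torus `{(z₁, z₂) : |z₁| = 1, |z₂| ≤ 1}`. -/
def solidTorus : Set (ℂ × ℂ) := {z | ‖z.1‖ = 1 ∧ ‖z.2‖ ≤ 1}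

/-!
Write a point of the solid torus as `(c, v + iy)` with `‖c‖ = 1` and put `ζ = c e^{arsinh y}`.
Then `Θ` acts by `(v, ζ) ↦ (v, ζ⁻¹)`, so `(v, J ζ)`, where `J ζ = (ζ + ζ⁻¹) / 2` is the Joukowski
map, separates exactly the `Θ`-orbits. `J` maps the circle `‖ζ‖ = e^t` onto the ellipse with foci
`±1` and semi-major axis `cosh t`, and `cosh² (arsinh y) = 1 + y²`; so the image of the torus is
`{(v, w) | v² + a(w)² ≤ 2}`, where `a(w)` is the semi-major axis of the confocal ellipse through
`w`. Since `a` is convex this is a compact convex body, hence homeomorphic to a closed ball, and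
the continuous bijection onto it from the compact quotient is a homeomorphism.
-/

open Set Metric

theorem Quot.nonempty_homeomorph_range {X Y : Type*} [TopologicalSpace X] [CompactSpace X]
    [TopologicalSpace Y] [T2Space Y] {r : X → X → Prop} {f : X → Y} (hf : Continuous f)
    (hr : ∀ x y, r x y → f x = f y) (hfib : ∀ x y, f x = f y → x = y ∨ r x y) :
    Nonempty (Quot r ≃ₜ range f) := by
  let g : Quot r → range f :=
    Quot.lift (rangeFactorization f) fun x y h => Subtype.ext (hr x y h)
  have hinj : Function.Injective g := by
    rintro ⟨x⟩ ⟨y⟩ h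
    rcases hfib x y (congrArg Subtype.val h) with rfl | hxy
    · rfl
    · exact Quot.sound hxy
  have hsurj : Function.Surjective g := by
    rintro ⟨_, x, rfl⟩
    exact ⟨Quot.mk r x, rfl⟩
  exact ⟨(continuous_quot_lift _ (hf.subtype_mk _)).homeoOfEquivCompactToT2
    (f := Equiv.ofBijective g ⟨hinj, hsurj⟩)⟩

theorem Convex.nonempty_homeomorph_closedBall {E F : Type*} [NormedAddCommGroup E]
    [NormedSpace ℝ E] [NormedAddCommGroup F] [NormedSpace ℝ F] (L : E ≃L[ℝ] F) {s : Set E}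
    (hconv : Convex ℝ s) (hint : (interior s).Nonempty) (hcomp : IsCompact s) :
    Nonempty (s ≃ₜ closedBall (0 : F) 1) := by
  set e := L.toHomeomorph
  have hconvL : Convex ℝ (e '' s) := hconv.linear_image L.toLinearMap
  have hcompL : IsCompact (e '' s) := hcomp.image e.continuous
  obtain ⟨h, -, hcl, -⟩ := exists_homeomorph_image_interior_closure_frontier_eq_unitBall
    hconvL (by rw [← e.image_interior]; exact hint.image _) hcompL.isBounded
  rw [hcompL.isClosed.closure_eq, image_image] at hcl
  exact ⟨((e.trans h).image s).trans (Homeomorph.setCongr hcl)⟩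

noncomputable def joukowski (ζ : ℂ) : ℂ := (ζ + ζ⁻¹) / 2

theorem joukowski_inv (ζ : ℂ) : joukowski ζ⁻¹ = joukowski ζ := by
  rw [joukowski, joukowski, inv_inv, add_comm]

theorem eq_or_eq_inv_of_joukowski_eq {ζ η : ℂ} (hζ : ζ ≠ 0) (hη : η ≠ 0)
    (h : joukowski ζ = joukowski η) : η = ζ ∨ η = ζ⁻¹ := by
  have key : (η - ζ) * (η * ζ - 1) = 0 := by
    unfold joukowski at h
    field_simp at h
    linear_combination -h
  rcases mul_eq_zero.1 key with h' | h'
  · exact .inl (sub_eq_zero.1 h')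
  · exact .inr (eq_inv_of_mul_eq_one_left (sub_eq_zero.1 h'))

theorem exists_joukowski_eq (w : ℂ) : ∃ ζ ≠ 0, joukowski ζ = w := by
  obtain ⟨s, hs⟩ := IsAlgClosed.exists_eq_mul_self (w ^ 2 - 1)
  have hinv : (w + s) * (w - s) = 1 := by linear_combination hs
  refine ⟨w + s, left_ne_zero_of_mul_eq_one hinv, ?_⟩
  rw [joukowski, inv_eq_of_mul_eq_one_right hinv]
  ring

/-- The semi-major axis of the ellipse with foci `±1` through `w`. -/
noncomputable def semiMajorAxis (w : ℂ) : ℝ := (dist w 1 + dist w (-1)) / 2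

theorem semiMajorAxis_nonneg (w : ℂ) : 0 ≤ semiMajorAxis w := by
  unfold semiMajorAxis; positivity

theorem continuous_semiMajorAxis : Continuous semiMajorAxis := by
  unfold semiMajorAxis; fun_prop

theorem convexOn_semiMajorAxis : ConvexOn ℝ univ semiMajorAxis := by
  have h : semiMajorAxis = fun w => (2 : ℝ)⁻¹ • (dist w 1 + dist w (-1)) := by
    ext w; rw [semiMajorAxis, smul_eq_mul]; ring
  rw [h]
  exact ((convexOn_univ_dist 1).add (convexOn_univ_dist (-1))).smul (by norm_num)

theorem semiMajorAxis_joukowski {ζ : ℂ} (hζ : ζ ≠ 0) :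
    semiMajorAxis (joukowski ζ) = (‖ζ‖ + ‖ζ‖⁻¹) / 2 := by
  have hsub : joukowski ζ - 1 = (ζ - 1) ^ 2 / (2 * ζ) := by
    unfold joukowski; field_simp; ring
  have hadd : joukowski ζ + 1 = (ζ + 1) ^ 2 / (2 * ζ) := by
    unfold joukowski; field_simp; ring
  have hpar : ‖ζ - 1‖ ^ 2 + ‖ζ + 1‖ ^ 2 = 2 * ‖ζ‖ ^ 2 + 2 := by
    have h := parallelogram_law_with_norm ℝ ζ 1
    rw [norm_one] at h
    linear_combination h
  have hn : ‖ζ‖ ≠ 0 := norm_ne_zero_iff.2 hζ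
  rw [semiMajorAxis, dist_eq_norm, dist_eq_norm, sub_neg_eq_add, hsub, hadd, norm_div, norm_div,
    norm_pow, norm_pow, norm_mul, Complex.norm_two]
  field_simp
  linear_combination hpar

theorem ne_zero_of_norm_eq_one {E : Type*} [SeminormedAddGroup E] {x : E} (h : ‖x‖ = 1) :
    x ≠ 0 :=
  ne_zero_of_norm_ne_zero (h ▸ one_ne_zero)

section Polar

variable {c c' : ℂ} {t t' : ℝ}

theorem norm_mul_exp (hc : ‖c‖ = 1) (t : ℝ) : ‖c * Real.exp t‖ = Real.exp t := by
  rw [norm_mul, hc, one_mul, Complex.norm_real, Real.norm_of_nonneg (Real.exp_pos t).le]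

theorem mul_exp_ne_zero (hc : c ≠ 0) (t : ℝ) : c * Real.exp t ≠ 0 :=
  mul_ne_zero hc (Complex.ofReal_ne_zero.2 (Real.exp_pos t).ne')

theorem mul_exp_inj (hc : ‖c‖ = 1) (hc' : ‖c'‖ = 1) :
    c' * Real.exp t' = c * Real.exp t ↔ c' = c ∧ t' = t := by
  refine ⟨fun h => ?_, by rintro ⟨rfl, rfl⟩; rfl⟩
  have ht : t' = t := Real.exp_injective (by rw [← norm_mul_exp hc', h, norm_mul_exp hc])
  subst ht
  exact ⟨mul_right_cancel₀ (Complex.ofReal_ne_zero.2 (Real.exp_pos t').ne') h, rfl⟩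

theorem inv_mul_exp (hc : ‖c‖ = 1) (t : ℝ) :
    (c * Real.exp t)⁻¹ = starRingEnd ℂ c * Real.exp (-t) := by
  rw [mul_inv, Complex.inv_eq_conj hc, Real.exp_neg, Complex.ofReal_inv]

theorem semiMajorAxis_joukowski_mul_exp (hc : ‖c‖ = 1) (t : ℝ) :
    semiMajorAxis (joukowski (c * Real.exp t)) = Real.cosh t := by
  rw [semiMajorAxis_joukowski (mul_exp_ne_zero (ne_zero_of_norm_eq_one hc) t),
    norm_mul_exp hc, Real.cosh_eq, Real.exp_neg]

theorem exists_joukowski_mul_exp_eq (w : ℂ) :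
    ∃ c : ℂ, ∃ t : ℝ, ‖c‖ = 1 ∧ joukowski (c * Real.exp t) = w := by
  obtain ⟨ζ, hζ, rfl⟩ := exists_joukowski_eq w
  refine ⟨Complex.exp (ζ.arg * Complex.I), Real.log ‖ζ‖, Complex.norm_exp_ofReal_mul_I _, ?_⟩
  rw [Real.exp_log (norm_pos_iff.2 hζ), mul_comm, Complex.norm_mul_exp_arg_mul_I]

end Polar

noncomputable def torusFold (z : ℂ × ℂ) : ℝ × ℂ :=
  (z.2.re, joukowski (z.1 * Real.exp (Real.arsinh z.2.im)))

def foldedBody : Set (ℝ × ℂ) := {p | p.1 ^ 2 + semiMajorAxis p.2 ^ 2 ≤ 2}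

theorem torusFold_theta {z : ℂ × ℂ} (hz : ‖z.1‖ = 1) : torusFold (Theta z) = torusFold z := by
  simp only [torusFold, Theta, Complex.conj_re, Complex.conj_im, Real.arsinh_neg,
    ← inv_mul_exp hz, joukowski_inv]

theorem eq_or_eq_theta_of_torusFold_eq {z z' : ℂ × ℂ} (hz : ‖z.1‖ = 1) (hz' : ‖z'.1‖ = 1)
    (h : torusFold z = torusFold z') : z' = z ∨ z' = Theta z := by
  obtain ⟨hre, hj⟩ := Prod.ext_iff.1 h
  rcases eq_or_eq_inv_of_joukowski_eq (mul_exp_ne_zero (ne_zero_of_norm_eq_one hz) _)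
    (mul_exp_ne_zero (ne_zero_of_norm_eq_one hz') _) hj with h' | h'
  · obtain ⟨h1, him⟩ := (mul_exp_inj hz hz').1 h'
    exact .inl (Prod.ext h1 (Complex.ext hre.symm (Real.arsinh_injective him)))
  · rw [inv_mul_exp hz, ← Real.arsinh_neg] at h'
    obtain ⟨h1, him⟩ := (mul_exp_inj (by rwa [Complex.norm_conj]) hz').1 h'
    exact .inr (Prod.ext h1 (Complex.ext hre.symm (Real.arsinh_injective him)))

theorem torusFold_fst_sq_add_semiMajorAxis_sq {z : ℂ × ℂ} (hz : ‖z.1‖ = 1) :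
    (torusFold z).1 ^ 2 + semiMajorAxis (torusFold z).2 ^ 2 = ‖z.2‖ ^ 2 + 1 := by
  rw [torusFold, semiMajorAxis_joukowski_mul_exp hz, Real.cosh_sq, Real.sinh_arsinh,
    Complex.sq_norm, Complex.normSq_apply]
  ring

theorem image_torusFold_solidTorus : torusFold '' solidTorus = foldedBody := by
  apply Subset.antisymm
  · rintro _ ⟨z, ⟨hz₁, hz₂⟩, rfl⟩
    show (torusFold z).1 ^ 2 + semiMajorAxis (torusFold z).2 ^ 2 ≤ 2
    rw [torusFold_fst_sq_add_semiMajorAxis_sq hz₁]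
    nlinarith [norm_nonneg z.2]
  · intro p (hp : p.1 ^ 2 + semiMajorAxis p.2 ^ 2 ≤ 2)
    obtain ⟨c, t, hc, hct⟩ := exists_joukowski_mul_exp_eq p.2
    have hfold : torusFold (c, ⟨p.1, Real.sinh t⟩) = p := by
      rw [torusFold, Real.arsinh_sinh, hct]
    have hnorm := torusFold_fst_sq_add_semiMajorAxis_sq (z := (c, ⟨p.1, Real.sinh t⟩)) hc
    rw [hfold] at hnorm
    refine ⟨_, ⟨hc, ?_⟩, hfold⟩
    nlinarith [norm_nonneg (⟨p.1, Real.sinh t⟩ : ℂ)]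

theorem continuousOn_torusFold : ContinuousOn torusFold {z | z.1 ≠ 0} := by
  have hζ : Continuous fun z : ℂ × ℂ => z.1 * (Real.exp (Real.arsinh z.2.im) : ℂ) := by
    have := Real.continuous_arsinh
    fun_prop
  exact (Complex.continuous_re.comp continuous_snd).continuousOn.prodMk
    ((hζ.continuousOn.add (hζ.continuousOn.inv₀ fun z hz => mul_exp_ne_zero hz _)).div_const 2)

theorem solidTorus_subset : solidTorus ⊆ {z | z.1 ≠ 0} :=
  fun _ hz => ne_zero_of_norm_eq_one hz.1

theorem isCompact_solidTorus : IsCompact solidTorus := by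
  have h : solidTorus = sphere 0 1 ×ˢ closedBall 0 1 := by
    ext; simp [solidTorus]
  rw [h]
  exact (isCompact_sphere 0 1).prod (isCompact_closedBall 0 1)

theorem isCompact_foldedBody : IsCompact foldedBody :=
  image_torusFold_solidTorus ▸
    isCompact_solidTorus.image_of_continuousOn (continuousOn_torusFold.mono solidTorus_subset)

theorem convex_foldedBody : Convex ℝ foldedBody := by
  have h₁ : ConvexOn ℝ univ fun p : ℝ × ℂ => p.1 ^ 2 := by
    have h := (Even.convexOn_pow (𝕜 := ℝ) even_two).comp_linearMap (LinearMap.fst ℝ ℝ ℂ)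
    rwa [preimage_univ] at h
  have h₂ : ConvexOn ℝ univ fun p : ℝ × ℂ => semiMajorAxis p.2 ^ 2 :=
    (convexOn_semiMajorAxis.comp_linearMap (LinearMap.snd ℝ ℝ ℂ)).pow
      (fun p _ => semiMajorAxis_nonneg p.2) 2
  simpa [foldedBody] using (h₁.add h₂).convex_le 2

theorem zero_mem_interior_foldedBody : (0 : ℝ × ℂ) ∈ interior foldedBody := by
  have hopen : IsOpen {p : ℝ × ℂ | p.1 ^ 2 + semiMajorAxis p.2 ^ 2 < 2} :=
    isOpen_lt ((continuous_fst.pow 2).add ((continuous_semiMajorAxis.comp continuous_snd).pow 2))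
      continuous_const
  have hsub : {p : ℝ × ℂ | p.1 ^ 2 + semiMajorAxis p.2 ^ 2 < 2} ⊆ foldedBody :=
    fun p (hp : p.1 ^ 2 + semiMajorAxis p.2 ^ 2 < 2) => hp.le
  refine interior_mono hsub ?_
  rw [hopen.interior_eq]
  show (0 : ℝ × ℂ).1 ^ 2 + semiMajorAxis (0 : ℝ × ℂ).2 ^ 2 < 2
  norm_num [semiMajorAxis]

/-- The quotient of the solid torus by the identification `z ∼ Θ z` is homeomorphic to
the closed unit ball in `ℝ³`. -/
theorem quotient_solidTorus_theta_homeomorph_ball :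
    Nonempty
      ((Quot fun x y : solidTorus => Theta (x : ℂ × ℂ) = (y : ℂ × ℂ)) ≃ₜ
        (Metric.closedBall (0 : EuclideanSpace ℝ (Fin 3)) 1)) := by
  have : CompactSpace solidTorus := isCompact_iff_compactSpace.1 isCompact_solidTorus
  have hcont : Continuous fun z : solidTorus => torusFold z :=
    continuousOn_iff_continuous_domRestrict.1 (continuousOn_torusFold.mono solidTorus_subset)
  obtain ⟨quotEquiv⟩ := Quot.nonempty_homeomorph_range hcont
    (fun x y h => by rw [← h, torusFold_theta x.2.1])
    (fun x y h => (eq_or_eq_theta_of_torusFold_eq x.2.1 y.2.1 h).imp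
      (fun h => (Subtype.ext h).symm) Eq.symm)
  have hrange : range (fun z : solidTorus => torusFold z) = foldedBody := by
    rw [← image_eq_range, image_torusFold_solidTorus]
  have L : (ℝ × ℂ) ≃L[ℝ] EuclideanSpace ℝ (Fin 3) := ContinuousLinearEquiv.ofFinrankEq (by simp)
  obtain ⟨bodyEquiv⟩ := convex_foldedBody.nonempty_homeomorph_closedBall L
    ⟨0, zero_mem_interior_foldedBody⟩ isCompact_foldedBody
  exact ⟨quotEquiv.trans ((Homeomorph.setCongr hrange).trans bodyEquiv)⟩
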